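/- arXiv:2306.02399 — 8 statements merged into one kernel-verified Lean document; each statement's English description precedes it below -/
import Mathlib

section
/- Let a ≤ b be real numbers, let u : ℝ → ℝ be continuous and nondecreasing, let λ ∈ ℝ, and let μ, ν be Borel probability measures on ℝ supported on [a,b] with CDFs F_μ, F_ν. Then ∫_{[a,b]} u(x − λ) dμ(x) − ∫_{[a,b]} u(x − λ) dν(x) ≤ (u(b − λ) − u(a − λ)) · sup_{t∈ℝ} |F_μ(t) − F_ν(t)|. -/
open MeasureTheory Set ENNReal

/-!
Put `g x = u (x - λ)` and let `dg` be its Stieltjes measure; continuity of `g` gives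
`dg [a, x) = g x - g a`. Computing the `μ ⊗ dg`-measure of `{(x, s) | a ≤ s < x}` in both orders
gives the layer-cake formula `∫ g dμ - g a = ∫_{[a, ∞)} μ (s, ∞) dg(s)`. Since
`μ (s, ∞) - ν (s, ∞) = F_ν s - F_μ s` and `μ (s, ∞) = 0` for `s ≥ b`, subtracting the formulas
for `μ` and `ν` bounds the difference by `dg [a, b) = g b - g a` times `sup |F_μ - F_ν|`.
-/

noncomputable def kolmogorovDist (μ ν : Measure ℝ) : ℝ :=
  ⨆ t : ℝ, |μ.real (Iic t) - ν.real (Iic t)|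

section kolmogorovDist

variable (μ ν : Measure ℝ)

lemma kolmogorovDist_nonneg : 0 ≤ kolmogorovDist μ ν :=
  Real.iSup_nonneg fun _ => abs_nonneg _

lemma measureReal_Iic_sub_le_kolmogorovDist [IsFiniteMeasure μ] [IsFiniteMeasure ν] (t : ℝ) :
    ν.real (Iic t) - μ.real (Iic t) ≤ kolmogorovDist μ ν := by
  have hbdd : BddAbove (range fun t => |μ.real (Iic t) - ν.real (Iic t)|) := by
    refine ⟨μ.real univ + ν.real univ, forall_mem_range.2 fun t => ?_⟩
    have hμt := measureReal_mono (μ := μ) (subset_univ (Iic t))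
    have hνt := measureReal_mono (μ := ν) (subset_univ (Iic t))
    have hμ0 : 0 ≤ μ.real univ := measureReal_nonneg
    have hν0 : 0 ≤ ν.real univ := measureReal_nonneg
    exact abs_sub_le_of_nonneg_of_le measureReal_nonneg (by linarith) measureReal_nonneg
      (by linarith)
  calc ν.real (Iic t) - μ.real (Iic t) ≤ |ν.real (Iic t) - μ.real (Iic t)| := le_abs_self _
    _ = |μ.real (Iic t) - ν.real (Iic t)| := abs_sub_comm _ _
    _ ≤ kolmogorovDist μ ν := le_ciSup hbdd t

lemma measure_Ioi_le_add_kolmogorovDist [IsProbabilityMeasure μ] [IsProbabilityMeasure ν]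
    (s : ℝ) : μ (Ioi s) ≤ ν (Ioi s) + ENNReal.ofReal (kolmogorovDist μ ν) := by
  rw [← ofReal_measureReal, ← ofReal_measureReal,
    ← ofReal_add measureReal_nonneg (kolmogorovDist_nonneg μ ν), ← compl_Iic,
    probReal_compl_eq_one_sub measurableSet_Iic, probReal_compl_eq_one_sub measurableSet_Iic]
  exact ofReal_le_ofReal (by linarith [measureReal_Iic_sub_le_kolmogorovDist μ ν s])

lemma setLIntegral_measure_Ioi_le_add_kolmogorovDist [IsProbabilityMeasure μ]
    [IsProbabilityMeasure ν] (ρ : Measure ℝ) {a b : ℝ} (hμ : ∀ᵐ x ∂μ, x ≤ b) :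
    ∫⁻ s in Ici a, μ (Ioi s) ∂ρ ≤
      ∫⁻ s in Ici a, ν (Ioi s) ∂ρ + ρ (Ico a b) * ENNReal.ofReal (kolmogorovDist μ ν) := by
  have hpointwise : ∀ s, μ (Ioi s) ≤
      ν (Ioi s) + (Iio b).indicator (fun _ => ENNReal.ofReal (kolmogorovDist μ ν)) s := by
    intro s
    by_cases hs : s < b
    · rw [indicator_of_mem (mem_Iio.2 hs)]
      exact measure_Ioi_le_add_kolmogorovDist μ ν s
    · have hIoi : Ioi s ⊆ {x | ¬x ≤ b} := fun x hx => not_le.2 ((not_lt.1 hs).trans_lt hx)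
      rw [measure_mono_null hIoi (ae_iff.1 hμ)]
      exact zero_le
  calc ∫⁻ s in Ici a, μ (Ioi s) ∂ρ
      ≤ ∫⁻ s in Ici a, ν (Ioi s) +
          (Iio b).indicator (fun _ => ENNReal.ofReal (kolmogorovDist μ ν)) s ∂ρ :=
        lintegral_mono hpointwise
    _ = _ := by
      rw [lintegral_add_right _ (measurable_const.indicator measurableSet_Iio),
        lintegral_indicator_const measurableSet_Iio, Measure.restrict_apply measurableSet_Iio,
        inter_comm, Ici_inter_Iio, mul_comm]

end kolmogorovDist

namespace StieltjesFunction

variable (F : StieltjesFunction ℝ)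

lemma measure_Ico_of_continuous (hF : Continuous F) (a b : ℝ) :
    F.measure (Ico a b) = ENNReal.ofReal (F b - F a) := by
  rw [measure_Ico, hF.continuousWithinAt.leftLim_eq, hF.continuousWithinAt.leftLim_eq]

theorem lintegral_measure_Ico_eq_setLIntegral_measure_Ioi (μ : Measure ℝ) [SFinite μ] (a : ℝ) :
    ∫⁻ x, F.measure (Ico a x) ∂μ = ∫⁻ s in Ici a, μ (Ioi s) ∂F.measure := by
  let T : Set (ℝ × ℝ) := {p | a ≤ p.2 ∧ p.2 < p.1}
  have hT : MeasurableSet T :=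
    (measurableSet_le measurable_const measurable_snd).inter
      (measurableSet_lt measurable_snd measurable_fst)
  have hsection : ∀ s, μ ((fun x => (x, s)) ⁻¹' T) = (Ici a).indicator (fun s => μ (Ioi s)) s := by
    intro s
    by_cases hs : a ≤ s
    · simp [T, hs, Ioi_def]
    · simp [T, hs]
  calc ∫⁻ x, F.measure (Ico a x) ∂μ = μ.prod F.measure T := (Measure.prod_apply hT).symm
    _ = ∫⁻ s, μ ((fun x => (x, s)) ⁻¹' T) ∂F.measure := Measure.prod_apply_symm hT
    _ = ∫⁻ s in Ici a, μ (Ioi s) ∂F.measure := by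
      simp_rw [hsection, lintegral_indicator measurableSet_Ici]

theorem ofReal_integral_sub_eq_setLIntegral_measure_Ioi (hF : Continuous F) (μ : Measure ℝ)
    [IsProbabilityMeasure μ] (hint : Integrable F μ) {a : ℝ} (ha : ∀ᵐ x ∂μ, a ≤ x) :
    ENNReal.ofReal (∫ x, F x ∂μ - F a) = ∫⁻ s in Ici a, μ (Ioi s) ∂F.measure := by
  have hnonneg : 0 ≤ᵐ[μ] fun x => F x - F a := ha.mono fun x hx => sub_nonneg.2 (F.mono hx)
  have hsub : ∫ x, F x ∂μ - F a = ∫ x, (F x - F a) ∂μ := by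
    rw [integral_sub hint (integrable_const _), integral_const, probReal_univ, one_smul]
  rw [← F.lintegral_measure_Ico_eq_setLIntegral_measure_Ioi, hsub,
    ofReal_integral_eq_lintegral_ofReal (f := fun x => F x - F a) (hint.sub (integrable_const _))
      hnonneg]
  simp_rw [F.measure_Ico_of_continuous hF]

end StieltjesFunction

/-- For a continuous nondecreasing `u` and probability measures `μ, ν` supported on
`[a, b]`, the difference of integrals of `x ↦ u (x - λ)` is bounded by
`(u (b - λ) - u (a - λ))` times the supremum distance between the CDFs. -/
theorem integral_utility_diff_le
    (a b : ℝ) (hab : a ≤ b) (u : ℝ → ℝ) (hu_cont : Continuous u)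
    (hu_mono : Monotone u) (lam : ℝ) (μ ν : Measure ℝ)
    [IsProbabilityMeasure μ] [IsProbabilityMeasure ν]
    (hμ : μ (Set.Icc a b) = 1) (hν : ν (Set.Icc a b) = 1) :
    (∫ x in Set.Icc a b, u (x - lam) ∂μ) - (∫ x in Set.Icc a b, u (x - lam) ∂ν) ≤
      (u (b - lam) - u (a - lam)) *
        ⨆ t : ℝ, |(μ (Set.Iic t)).toReal - (ν (Set.Iic t)).toReal| := by
  have hμ' : ∀ᵐ x ∂μ, x ∈ Icc a b := (mem_ae_iff_prob_eq_one measurableSet_Icc).2 hμ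
  have hν' : ∀ᵐ x ∂ν, x ∈ Icc a b := (mem_ae_iff_prob_eq_one measurableSet_Icc).2 hν
  have hF : Continuous fun x => u (x - lam) := hu_cont.comp (continuous_sub_right lam)
  let F : StieltjesFunction ℝ := ⟨fun x => u (x - lam),
    fun x y hxy => hu_mono (sub_le_sub_right hxy lam), fun _ => hF.continuousWithinAt⟩
  have hint : ∀ (m : Measure ℝ) [IsProbabilityMeasure m], (∀ᵐ x ∂m, x ∈ Icc a b) →
      Integrable F m := fun m _ hm => by
    have := hF.integrableOn_Icc (μ := m) (a := a) (b := b)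
    rwa [IntegrableOn, Measure.restrict_eq_self_of_ae_mem hm] at this
  rw [Measure.restrict_eq_self_of_ae_mem hμ', Measure.restrict_eq_self_of_ae_mem hν']
  change ∫ x, F x ∂μ - ∫ x, F x ∂ν ≤ (F b - F a) * kolmogorovDist μ ν
  have hlayer : ENNReal.ofReal (∫ x, F x ∂μ - F a) ≤ ENNReal.ofReal (∫ x, F x ∂ν - F a) +
      ENNReal.ofReal (F b - F a) * ENNReal.ofReal (kolmogorovDist μ ν) := by
    rw [F.ofReal_integral_sub_eq_setLIntegral_measure_Ioi hF μ (hint μ hμ')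
        (hμ'.mono fun _ h => h.1),
      F.ofReal_integral_sub_eq_setLIntegral_measure_Ioi hF ν (hint ν hν')
        (hν'.mono fun _ h => h.1),
      ← F.measure_Ico_of_continuous hF]
    exact setLIntegral_measure_Ioi_le_add_kolmogorovDist μ ν F.measure
      (hμ'.mono fun _ h => h.2)
  have hM : 0 ≤ F b - F a := sub_nonneg.2 (F.mono hab)
  have hD := kolmogorovDist_nonneg μ ν
  have hνa : F a ≤ ∫ x, F x ∂ν := by
    simpa using integral_mono_ae (integrable_const (F a)) (hint ν hν')
      (hν'.mono fun x hx => F.mono hx.1)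
  rw [← ofReal_mul hM, ← ofReal_add (sub_nonneg.2 hνa) (mul_nonneg hM hD),
    ofReal_le_ofReal_iff (by positivity)] at hlayer
  linarith
end

section
/- Let a ≤ b be real numbers and let u : ℝ → ℝ be nondecreasing and concave (hence continuous) with u(0) = 0. For a Borel probability measure μ supported on [a,b], define the optimized certainty equivalent C_u(μ) = sup_{λ ∈ [a,b]} ( λ + ∫_{[a,b]} u(x − λ) dμ(x) ). Then for all Borel probability measures μ, ν supported on [a,b] with CDFs F_μ, F_ν: C_u(μ) − C_u(ν) ≤ (−u(a − b)) · sup_{t∈ℝ} |F_μ(t) − F_ν(t)|. -/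
/-!
Fix `λ ∈ [a, b]`. The integrand `x ↦ u (x - λ)` is monotone, and by concavity its increment over
`[a, b]` is at most `u 0 - u (a - b) = -u (a - b)`. By the layer-cake formula the difference of its
integrals against `μ` and `ν` is an integral, over a range of levels of that length, of
`μ U - ν U` where each superlevel set `U` is an open upper set, i.e. a ray `(c, ∞)` (or `∅`, `ℝ`);
so every integrand is bounded by the sup distance of the CDFs. Taking the supremum over `λ`
concludes.
-/

open MeasureTheory Set

/-- The optimized certainty equivalent (OCE) of a Borel probability measure `μ`
supported on `[a, b]`, associated with utility function `u`:
`C_u(μ) = sup_{λ ∈ [a,b]} (λ + ∫_{[a,b]} u (x - λ) dμ(x))`. -/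
noncomputable def OCE (u : ℝ → ℝ) (a b : ℝ) (μ : Measure ℝ) : ℝ :=
  ⨆ lam : Set.Icc a b, ((lam : ℝ) + ∫ x in Set.Icc a b, u (x - (lam : ℝ)) ∂μ)

theorem ConcaveOn.map_add_sub_map_le {𝕜 : Type*} [Field 𝕜] [LinearOrder 𝕜] [IsStrictOrderedRing 𝕜]
    {s : Set 𝕜} {f : 𝕜 → 𝕜} (hf : ConcaveOn 𝕜 s f) {x y h : 𝕜} (hx : x ∈ s) (hyh : y + h ∈ s)
    (hxy : x ≤ y) (hh : 0 ≤ h) :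
    f (y + h) - f y ≤ f (x + h) - f x := by
  rcases (add_nonneg (sub_nonneg.2 hxy) hh).eq_or_lt with hd | hd
  · obtain rfl : x = y := by linarith
    obtain rfl : h = 0 := by linarith
    rfl
  have hsum : h / (y - x + h) + (y - x) / (y - x + h) = 1 := by
    rw [← add_div, add_comm, div_self hd.ne']
  -- `y` and `x + h` are the two convex combinations of `x` and `y + h` with swapped weights
  have hy := hf.2 hx hyh (div_nonneg hh hd.le) (div_nonneg (sub_nonneg.2 hxy) hd.le) hsum
  have hxh := hf.2 hx hyh (div_nonneg (sub_nonneg.2 hxy) hd.le) (div_nonneg hh hd.le)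
    ((add_comm _ _).trans hsum)
  simp only [smul_eq_mul] at hy hxh
  rw [show h / (y - x + h) * x + (y - x) / (y - x + h) * (y + h) = y by field_simp; ring] at hy
  rw [show (y - x) / (y - x + h) * x + h / (y - x + h) * (y + h) = x + h by
    field_simp; ring] at hxh
  linear_combination hy + hxh - (f x + f (y + h)) * hsum

theorem IsLowerSet.eq_Iic_csSup {α : Type*} [ConditionallyCompleteLinearOrder α]
    [TopologicalSpace α] [OrderTopology α] {s : Set α} (hs : IsLowerSet s) (hc : IsClosed s)
    (hne : s.Nonempty) (hbdd : BddAbove s) : s = Iic (sSup s) :=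
  Set.ext fun _ ↦ ⟨(le_csSup hbdd ·), (hs · (hc.csSup_mem hne hbdd))⟩

theorem IsLowerSet.eq_univ_of_not_bddAbove {α : Type*} [LinearOrder α] {s : Set α}
    (hs : IsLowerSet s) (hbdd : ¬BddAbove s) : s = univ :=
  eq_univ_of_forall fun x ↦
    let ⟨_, hy, hxy⟩ := not_bddAbove_iff.1 hbdd x
    hs hxy.le hy

section CDFBound

variable {α : Type*} [ConditionallyCompleteLinearOrder α] [TopologicalSpace α] [OrderTopology α]
  [MeasurableSpace α] {μ ν : Measure α} [IsProbabilityMeasure μ] [IsProbabilityMeasure ν] {D : ℝ}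

theorem IsLowerSet.measureReal_sub_le_of_forall_Iic (hD0 : 0 ≤ D)
    (hD : ∀ c, ν.real (Iic c) - μ.real (Iic c) ≤ D) {s : Set α} (hs : IsLowerSet s)
    (hc : IsClosed s) : ν.real s - μ.real s ≤ D := by
  rcases s.eq_empty_or_nonempty with rfl | hne
  · simpa using hD0
  by_cases hbdd : BddAbove s
  · rw [hs.eq_Iic_csSup hc hne hbdd]
    exact hD _
  · rw [hs.eq_univ_of_not_bddAbove hbdd]
    simpa using hD0

theorem IsUpperSet.measureReal_sub_le_of_forall_Iic [OpensMeasurableSpace α] (hD0 : 0 ≤ D)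
    (hD : ∀ c, ν.real (Iic c) - μ.real (Iic c) ≤ D) {s : Set α} (hs : IsUpperSet s)
    (ho : IsOpen s) : μ.real s - ν.real s ≤ D := by
  have := hs.compl.measureReal_sub_le_of_forall_Iic hD0 hD ho.isClosed_compl
  rwa [probReal_compl_eq_one_sub ho.measurableSet, probReal_compl_eq_one_sub ho.measurableSet,
    sub_sub_sub_cancel_left] at this

end CDFBound

namespace MeasureTheory

theorem Integrable.integral_eq_integral_Ioc_meas_lt {α : Type*} [MeasurableSpace α]
    {μ : Measure α} {f : α → ℝ} {M : ℝ} (hf : Integrable f μ) (hf0 : 0 ≤ᵐ[μ] f)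
    (hfM : f ≤ᵐ[μ] fun _ ↦ M) :
    ∫ ω, f ω ∂μ = ∫ t in Ioc 0 M, μ.real {a | t < f a} := by
  rw [hf.integral_eq_integral_meas_lt hf0,
    setIntegral_eq_of_subset_of_ae_sdiff_eq_zero nullMeasurableSet_Ioi Ioc_subset_Ioi_self]
  refine .of_forall fun t ht ↦ ?_
  have hMt : M < t := by simp_all only [mem_sdiff, mem_Ioi, mem_Ioc, not_and, not_le]
  rw [measureReal_def, ENNReal.toReal_eq_zero_iff, measure_eq_zero_iff_ae_notMem]
  refine .inl ?_
  filter_upwards [hfM] with a ha using (hMt.trans_le' ha).not_gt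

end MeasureTheory

section MonotoneIntegrand

variable {a b : ℝ} {G : ℝ → ℝ}

theorem setIntegral_Icc_eq_add_integral_Ioc_measureReal_lt (hG : Monotone G) (hGc : Continuous G)
    {ρ : Measure ℝ} [IsProbabilityMeasure ρ] (hρ : ρ (Icc a b) = 1) :
    ∫ x in Icc a b, G x ∂ρ = G a + ∫ t in Ioc 0 (G b - G a), ρ.real {x | t < G x - G a} := by
  have hae : ∀ᵐ x ∂ρ, x ∈ Icc a b :=
    (ae_iff_measure_eq measurableSet_Icc.nullMeasurableSet).2 (by rw [measure_univ]; exact hρ)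
  rw [Measure.restrict_eq_self_of_ae_mem hae]
  have hint : Integrable G ρ := by
    rw [← Measure.restrict_eq_self_of_ae_mem hae]
    exact hGc.continuousOn.integrableOn_compact isCompact_Icc
  have hlayer : ∫ x, (G x - G a) ∂ρ = ∫ t in Ioc 0 (G b - G a), ρ.real {x | t < G x - G a} :=
    (hint.sub (integrable_const (G a))).integral_eq_integral_Ioc_meas_lt
      (by filter_upwards [hae] with x hx using sub_nonneg.2 (hG hx.1))
    (by filter_upwards [hae] with x hx using sub_le_sub_right (hG hx.2) _)
  rw [← hlayer, integral_sub hint (integrable_const _), integral_const, probReal_univ, one_smul,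
    add_sub_cancel]

theorem setIntegral_Icc_sub_le_of_monotone (hab : a ≤ b) (hG : Monotone G) (hGc : Continuous G)
    {μ ν : Measure ℝ} [IsProbabilityMeasure μ] [IsProbabilityMeasure ν]
    (hμ : μ (Icc a b) = 1) (hν : ν (Icc a b) = 1) {D : ℝ} (hD0 : 0 ≤ D)
    (hD : ∀ c, ν.real (Iic c) - μ.real (Iic c) ≤ D) :
    ∫ x in Icc a b, G x ∂μ - ∫ x in Icc a b, G x ∂ν ≤ (G b - G a) * D := by
  have hint (ρ : Measure ℝ) [IsFiniteMeasure ρ] :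
      IntegrableOn (fun t ↦ ρ.real {x | t < G x - G a}) (Ioc 0 (G b - G a)) := by
    have hanti : Antitone fun t ↦ ρ.real {x | t < G x - G a} := fun s t hst ↦
      measureReal_mono fun x (hx : t < G x - G a) ↦ hst.trans_lt hx
    exact (hanti.locallyIntegrable.integrableOn_isCompact isCompact_Icc).mono_set
      Ioc_subset_Icc_self
  rw [setIntegral_Icc_eq_add_integral_Ioc_measureReal_lt hG hGc hμ,
    setIntegral_Icc_eq_add_integral_Ioc_measureReal_lt hG hGc hν, add_sub_add_left_eq_sub,
    ← integral_sub (hint μ) (hint ν)]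
  calc ∫ t in Ioc 0 (G b - G a), (μ.real {x | t < G x - G a} - ν.real {x | t < G x - G a})
      ≤ ∫ _ in Ioc 0 (G b - G a), D := by
        refine setIntegral_mono ((hint μ).sub (hint ν)) (integrableOn_const measure_Ioc_lt_top.ne)
          fun t ↦ ?_
        refine IsUpperSet.measureReal_sub_le_of_forall_Iic hD0 hD
          (fun x y hxy hx ↦ hx.trans_le (sub_le_sub_right (hG hxy) _)) ?_
        exact isOpen_lt continuous_const (hGc.sub continuous_const)
    _ = (G b - G a) * D := by
        rw [setIntegral_const, Real.volume_real_Ioc_of_le (sub_nonneg.2 (hG hab)), sub_zero,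
          smul_eq_mul]

end MonotoneIntegrand

theorem bddAbove_range_abs_measureReal_sub {α ι : Type*} [MeasurableSpace α] (μ ν : Measure α)
    [IsProbabilityMeasure μ] [IsProbabilityMeasure ν] (s : ι → Set α) :
    BddAbove (range fun i ↦ |μ.real (s i) - ν.real (s i)|) :=
  ⟨1, forall_mem_range.2 fun _ ↦
    abs_sub_le_of_nonneg_of_le measureReal_nonneg measureReal_le_one measureReal_nonneg
      measureReal_le_one⟩

theorem bddAbove_range_add_setIntegral_Icc {u : ℝ → ℝ} (hu : Monotone u) (a b : ℝ)
    (ν : Measure ℝ) [IsFiniteMeasure ν] :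
    BddAbove (range fun lam : Icc a b ↦ (lam : ℝ) + ∫ x in Icc a b, u (x - lam) ∂ν) := by
  refine ⟨b + ν.real (Icc a b) * u (b - a), forall_mem_range.2 fun ⟨lam, hlam⟩ ↦ ?_⟩
  have hint : IntegrableOn (fun x ↦ u (x - lam)) (Icc a b) ν :=
    ((hu.comp fun _ _ h ↦ sub_le_sub_right h lam).monotoneOn _).integrableOn_isCompact
      isCompact_Icc
  have hle : ∫ x in Icc a b, u (x - lam) ∂ν ≤ ∫ _ in Icc a b, u (b - a) ∂ν :=
    setIntegral_mono_on hint integrableOn_const measurableSet_Icc fun x hx ↦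
      hu (by linarith [hx.2, hlam.1])
  rw [setIntegral_const, smul_eq_mul] at hle
  exact add_le_add hlam.2 hle

/-- Lipschitz continuity of the OCE with concave utility with respect to the supremum
distance of CDFs, with Lipschitz constant `-u (a - b)`. -/
theorem oce_concave_lipschitz_sup
    (a b : ℝ) (hab : a ≤ b) (u : ℝ → ℝ) (hu_mono : Monotone u)
    (hu_conc : ConcaveOn ℝ Set.univ u) (hu0 : u 0 = 0)
    (μ ν : Measure ℝ) [IsProbabilityMeasure μ] [IsProbabilityMeasure ν]
    (hμ : μ (Set.Icc a b) = 1) (hν : ν (Set.Icc a b) = 1) :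
    OCE u a b μ - OCE u a b ν ≤
      (-u (a - b)) * ⨆ t : ℝ, |(μ (Set.Iic t)).toReal - (ν (Set.Iic t)).toReal| := by
  have hu_cont : Continuous u := continuousOn_univ.1 (hu_conc.continuousOn isOpen_univ)
  simp_rw [← measureReal_def]
  set D := ⨆ t : ℝ, |μ.real (Iic t) - ν.real (Iic t)|
  have hbdd := bddAbove_range_abs_measureReal_sub μ ν Iic
  have hD0 : 0 ≤ D := (abs_nonneg _).trans (le_ciSup hbdd 0)
  have hD (c : ℝ) : ν.real (Iic c) - μ.real (Iic c) ≤ D :=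
    (le_abs_self _).trans (abs_sub_comm (μ.real (Iic c)) _ ▸ le_ciSup hbdd c)
  have : Nonempty (Icc a b) := (nonempty_Icc.2 hab).to_subtype
  rw [sub_le_iff_le_add', OCE]
  refine ciSup_le fun ⟨lam, hlam⟩ ↦ ?_
  have hinc := hu_conc.map_add_sub_map_le (mem_univ (a - b)) (mem_univ (a - lam + (b - a)))
    (by linarith [hlam.2]) (sub_nonneg.2 hab)
  rw [show a - lam + (b - a) = b - lam by ring, show a - b + (b - a) = 0 by ring, hu0,
    zero_sub] at hinc
  have hdiff := setIntegral_Icc_sub_le_of_monotone hab (G := fun x ↦ u (x - lam))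
    (hu_mono.comp fun _ _ h ↦ sub_le_sub_right h lam) (by fun_prop) hμ hν hD0 hD
  calc lam + ∫ x in Icc a b, u (x - lam) ∂μ
      ≤ (lam + ∫ x in Icc a b, u (x - lam) ∂ν) + (u (b - lam) - u (a - lam)) * D := by
        linarith
    _ ≤ OCE u a b ν + -u (a - b) * D :=
        add_le_add (le_ciSup (bddAbove_range_add_setIntegral_Icc hu_mono a b ν) ⟨lam, hlam⟩)
          (mul_le_mul_of_nonneg_right hinc hD0)
end

section
/- Let a ≤ b be real numbers and let u : ℝ → ℝ be nondecreasing and convex (hence continuous) with u(0) = 0. For a Borel probability measure μ supported on [a,b], define the optimized certainty equivalent C_u(μ) = sup_{λ ∈ [a,b]} ( λ + ∫_{[a,b]} u(x − λ) dμ(x) ). Then for all Borel probability measures μ, ν supported on [a,b] with CDFs F_μ, F_ν: C_u(μ) − C_u(ν) ≤ u(b − a) · sup_{t∈ℝ} |F_μ(t) − F_ν(t)|. -/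
/-!
Fix `λ ∈ [a, b]`. The function `g x = u (x - λ)` is continuous and nondecreasing, so it is a
Stieltjes function with measure `dg`, and Tonelli applied to `{(x, t) | a < t ≤ x}` gives, for `μ`
supported on `[a, b]`,
`∫ g dμ = g a + ∫_{(a, b]} μ [t, ∞) dg(t)`.
Since `μ [t, ∞) - ν [t, ∞) = F_ν(t⁻) - F_μ(t⁻) ≤ ‖F_μ - F_ν‖_∞`, the two integrals differ by at
most `‖F_μ - F_ν‖_∞ · (g b - g a)`, and `g b - g a = u (b - λ) - u (a - λ) ≤ u (b - a) - u 0`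
because the increments of a convex function grow. Take the supremum over `λ`.
-/

open MeasureTheory

open Set Filter ProbabilityTheory

lemma ConvexOn.map_add_sub_map_le_of_le {s : Set ℝ} {u : ℝ → ℝ} (hu : ConvexOn ℝ s u)
    {x y d : ℝ} (hx : x ∈ s) (hyd : y + d ∈ s) (hxy : x ≤ y) (hd : 0 ≤ d) :
    u (x + d) - u x ≤ u (y + d) - u y := by
  rcases (add_nonneg (sub_nonneg.2 hxy) hd).eq_or_lt with h | h
  · obtain rfl : d = 0 := by linarith
    obtain rfl : y = x := by linarith
    rfl
  -- `y` and `x + d` are the convex combinations of `x` and `y + d` with swapped weights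
  have hw : d / (y - x + d) + (y - x) / (y - x + d) = 1 := by field_simp; ring
  have hy := hu.2 hx hyd (div_nonneg hd h.le) (div_nonneg (sub_nonneg.2 hxy) h.le) hw
  have hxd := hu.2 hx hyd (div_nonneg (sub_nonneg.2 hxy) h.le) (div_nonneg hd h.le)
    ((add_comm _ _).trans hw)
  have ey : d / (y - x + d) * x + (y - x) / (y - x + d) * (y + d) = y := by field_simp; ring
  have exd : (y - x) / (y - x + d) * x + d / (y - x + d) * (y + d) = x + d := by
    field_simp; ring
  simp only [smul_eq_mul, ey, exd] at hy hxd
  linear_combination hy + hxd + (u x + u (y + d)) * hw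

lemma measureReal_Iio_eq_leftLim_cdf (μ : Measure ℝ) [IsProbabilityMeasure μ] (t : ℝ) :
    μ.real (Iio t) = Function.leftLim (cdf μ) t := by
  conv_lhs => rw [← measure_cdf μ]
  rw [measureReal_def, StieltjesFunction.measure_Iio _ (tendsto_cdf_atBot μ), sub_zero,
    ENNReal.toReal_ofReal]
  exact (cdf_nonneg μ (t - 1)).trans ((cdf μ).mono.le_leftLim (sub_one_lt t))

lemma measureReal_Iio_sub_le {μ ν : Measure ℝ} [IsProbabilityMeasure μ] [IsProbabilityMeasure ν]
    {D : ℝ} (hD : ∀ t, μ.real (Iic t) - ν.real (Iic t) ≤ D) (t : ℝ) :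
    μ.real (Iio t) - ν.real (Iio t) ≤ D := by
  rw [measureReal_Iio_eq_leftLim_cdf, measureReal_Iio_eq_leftLim_cdf]
  refine le_of_tendsto (((cdf μ).mono.tendsto_leftLim t).sub ((cdf ν).mono.tendsto_leftLim t))
    (Eventually.of_forall fun s => ?_)
  simpa only [cdf_eq_real] using hD s

lemma lintegral_measure_Iic_eq_lintegral_measure_Ici (μ ν : Measure ℝ) [SFinite μ] [SFinite ν] :
    ∫⁻ x, ν (Iic x) ∂μ = ∫⁻ t, μ (Ici t) ∂ν := by
  have hS : MeasurableSet {p : ℝ × ℝ | p.2 ≤ p.1} := measurableSet_le measurable_snd measurable_fst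
  exact (Measure.prod_apply hS).symm.trans (Measure.prod_apply_symm hS)

lemma StieltjesFunction.lintegral_ofReal_sub_eq (g : StieltjesFunction ℝ) (μ : Measure ℝ)
    [SFinite μ] (a : ℝ) :
    ∫⁻ x, ENNReal.ofReal (g x - g a) ∂μ = ∫⁻ t in Ioi a, μ (Ici t) ∂g.measure := by
  rw [← lintegral_measure_Iic_eq_lintegral_measure_Ici]
  refine lintegral_congr fun x => ?_
  rw [Measure.restrict_apply measurableSet_Iic, Iic_inter_Ioi, g.measure_Ioc]

lemma Monotone.integrable_of_ae_mem_Icc {f : ℝ → ℝ} (hf : Monotone f) {μ : Measure ℝ}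
    [IsFiniteMeasure μ] {a b : ℝ} (hμ : ∀ᵐ x ∂μ, x ∈ Icc a b) : Integrable f μ :=
  Integrable.of_bound hf.measurable.aestronglyMeasurable (max |f a| |f b|)
    (hμ.mono fun _ hx => abs_le_max_abs_abs (hf hx.1) (hf hx.2))

lemma StieltjesFunction.integral_eq_add_integral_measureReal_Ici (g : StieltjesFunction ℝ)
    {μ : Measure ℝ} [IsProbabilityMeasure μ] {a b : ℝ} (hμ : ∀ᵐ x ∂μ, x ∈ Icc a b) :
    ∫ x, g x ∂μ = g a + ∫ t in Ioc a b, μ.real (Ici t) ∂g.measure := by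
  have hsupp : (fun t => μ (Ici t)).support ⊆ Iic b := fun t ht => not_lt.1 fun hbt =>
    ht (measure_mono_null
      (fun x (hx : t ≤ x) (hxab : x ∈ Icc a b) => (hbt.trans_le hx).not_ge hxab.2) (ae_iff.1 hμ))
  have hlin : ∫ x, (g x - g a) ∂μ = (∫⁻ t in Ioc a b, μ (Ici t) ∂g.measure).toReal := by
    rw [integral_eq_lintegral_of_nonneg_ae (hμ.mono fun x hx => sub_nonneg.2 (g.mono hx.1))
        (g.mono.measurable.sub_const _).aestronglyMeasurable,
      g.lintegral_ofReal_sub_eq, ← setLIntegral_eq_of_support_subset hsupp,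
      Measure.restrict_restrict measurableSet_Iic, Iic_inter_Ioi]
  have hreal : ∫ t in Ioc a b, μ.real (Ici t) ∂g.measure
      = (∫⁻ t in Ioc a b, μ (Ici t) ∂g.measure).toReal :=
    integral_toReal
      (Antitone.measurable fun _ _ h => measure_mono (Ici_subset_Ici.2 h)).aemeasurable
      (ae_of_all _ fun _ => measure_lt_top _ _)
  rw [hreal, ← hlin, integral_sub (g.mono.integrable_of_ae_mem_Icc hμ) (integrable_const _)]
  simp

lemma StieltjesFunction.integral_sub_integral_le (g : StieltjesFunction ℝ) {μ ν : Measure ℝ}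
    [IsProbabilityMeasure μ] [IsProbabilityMeasure ν] {a b D : ℝ}
    (hμ : ∀ᵐ x ∂μ, x ∈ Icc a b) (hν : ∀ᵐ x ∂ν, x ∈ Icc a b)
    (hD : ∀ t, |μ.real (Iic t) - ν.real (Iic t)| ≤ D) :
    ∫ x, g x ∂μ - ∫ x, g x ∂ν ≤ (g b - g a) * D := by
  obtain ⟨x, hx⟩ := hμ.exists
  have hab : a ≤ b := hx.1.trans hx.2
  have : IsFiniteMeasure (g.measure.restrict (Ioc a b)) :=
    isFiniteMeasure_restrict.2 (by simp [g.measure_Ioc])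
  have hint (σ : Measure ℝ) [IsProbabilityMeasure σ] :
      IntegrableOn (fun t => σ.real (Ici t)) (Ioc a b) g.measure :=
    Integrable.of_bound (Antitone.measurable fun _ _ h =>
      measureReal_mono (Ici_subset_Ici.2 h)).aestronglyMeasurable 1 (ae_of_all _ fun t => by
        rw [Real.norm_eq_abs, abs_of_nonneg measureReal_nonneg]; exact measureReal_le_one)
  have hIci (t : ℝ) : μ.real (Ici t) - ν.real (Ici t) ≤ D := by
    have hIio := measureReal_Iio_sub_le (μ := ν) (ν := μ) (D := D)
      (fun s => by linarith [(abs_le.1 (hD s)).1]) t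
    rw [← compl_Iio, probReal_compl_eq_one_sub measurableSet_Iio,
      probReal_compl_eq_one_sub measurableSet_Iio]
    linarith
  rw [g.integral_eq_add_integral_measureReal_Ici hμ,
    g.integral_eq_add_integral_measureReal_Ici hν, add_sub_add_left_eq_sub,
    ← integral_sub (hint μ) (hint ν)]
  calc _ ≤ ∫ _ in Ioc a b, D ∂g.measure :=
        integral_mono ((hint μ).sub (hint ν)) (integrable_const D) hIci
    _ = (g b - g a) * D := by
      rw [setIntegral_const, measureReal_def, g.measure_Ioc,
        ENNReal.toReal_ofReal (sub_nonneg.2 (g.mono hab)), smul_eq_mul]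

def StieltjesFunction.ofContinuous {f : ℝ → ℝ} (hf : Monotone f) (hc : Continuous f) :
    StieltjesFunction ℝ :=
  ⟨f, hf, fun _ => hc.continuousWithinAt⟩

lemma integral_comp_sub_le {u : ℝ → ℝ} (hu : Monotone u) {ν : Measure ℝ}
    [IsProbabilityMeasure ν] {a b l : ℝ} (hν : ∀ᵐ x ∂ν, x ∈ Icc a b) (hl : a ≤ l) :
    ∫ x, u (x - l) ∂ν ≤ u (b - a) := by
  have hmono : Monotone fun x => u (x - l) := fun _ _ h => hu (sub_le_sub_right h l)
  calc ∫ x, u (x - l) ∂ν ≤ ∫ _, u (b - a) ∂ν :=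
        integral_mono_ae (hmono.integrable_of_ae_mem_Icc hν) (integrable_const _)
          (hν.mono fun _ hx => hu (sub_le_sub hx.2 hl))
    _ = u (b - a) := by simp

lemma integral_comp_sub_sub_integral_comp_sub_le {u : ℝ → ℝ} (hu_mono : Monotone u)
    (hu_conv : ConvexOn ℝ univ u) (hu0 : u 0 = 0) {μ ν : Measure ℝ} [IsProbabilityMeasure μ]
    [IsProbabilityMeasure ν] {a b D l : ℝ} (hμ : ∀ᵐ x ∂μ, x ∈ Icc a b)
    (hν : ∀ᵐ x ∂ν, x ∈ Icc a b) (hD : ∀ t, |μ.real (Iic t) - ν.real (Iic t)| ≤ D)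
    (hl : l ∈ Icc a b) :
    ∫ x, u (x - l) ∂μ - ∫ x, u (x - l) ∂ν ≤ u (b - a) * D := by
  have hcont : Continuous u := continuousOn_univ.1 (hu_conv.continuousOn isOpen_univ)
  have hStieltjes : ∫ x, u (x - l) ∂μ - ∫ x, u (x - l) ∂ν ≤ (u (b - l) - u (a - l)) * D :=
    (StieltjesFunction.ofContinuous (fun _ _ h => hu_mono (sub_le_sub_right h l))
      (hcont.comp (continuous_sub_right l))).integral_sub_integral_le hμ hν hD
  have hincr : u (b - l) - u (a - l) ≤ u (b - a) := by
    simpa [hu0] using hu_conv.map_add_sub_map_le_of_le (mem_univ (a - l)) (mem_univ _)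
      (sub_nonpos.2 hl.1) (sub_nonneg.2 (hl.1.trans hl.2))
  exact hStieltjes.trans (mul_le_mul_of_nonneg_right hincr ((abs_nonneg _).trans (hD 0)))

theorem oce_convex_lipschitz_sup_general
    (a b : ℝ) (u : ℝ → ℝ) (hu_mono : Monotone u)
    (hu_conv : ConvexOn ℝ Set.univ u) (hu0 : u 0 = 0)
    (μ ν : Measure ℝ) [IsProbabilityMeasure μ] [IsProbabilityMeasure ν]
    (hμ : μ (Set.Icc a b) = 1) (hν : ν (Set.Icc a b) = 1) :
    OCE u a b μ - OCE u a b ν ≤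
      u (b - a) * ⨆ t : ℝ, |(μ (Set.Iic t)).toReal - (ν (Set.Iic t)).toReal| := by
  have hμ' : ∀ᵐ x ∂μ, x ∈ Icc a b := (prob_compl_eq_zero_iff measurableSet_Icc).2 hμ
  have hν' : ∀ᵐ x ∂ν, x ∈ Icc a b := (prob_compl_eq_zero_iff measurableSet_Icc).2 hν
  have hD (t : ℝ) : |μ.real (Iic t) - ν.real (Iic t)| ≤
      ⨆ t : ℝ, |(μ (Set.Iic t)).toReal - (ν (Set.Iic t)).toReal| :=
    le_ciSup ⟨1, forall_mem_range.2 fun s => abs_sub_le_of_nonneg_of_le measureReal_nonneg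
      measureReal_le_one measureReal_nonneg measureReal_le_one⟩ t
  have hbdd : BddAbove (range fun l : Icc a b => (l : ℝ) + ∫ x, u (x - l) ∂ν) :=
    ⟨b + u (b - a), forall_mem_range.2 fun l =>
      add_le_add l.2.2 (integral_comp_sub_le hu_mono hν' l.2.1)⟩
  obtain ⟨x, hx⟩ := hμ'.exists
  have : Nonempty (Icc a b) := ⟨⟨x, hx⟩⟩
  rw [OCE, OCE, Measure.restrict_eq_self_of_ae_mem hμ', Measure.restrict_eq_self_of_ae_mem hν',
    sub_le_iff_le_add]
  refine ciSup_le fun l => ?_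
  have hl := integral_comp_sub_sub_integral_comp_sub_le hu_mono hu_conv hu0 hμ' hν' hD l.2
  have hν_le := le_ciSup hbdd l
  linarith

/-- Lipschitz continuity of the OCE with convex utility with respect to the supremum
distance of CDFs, with Lipschitz constant `u (b - a)`. -/
theorem oce_convex_lipschitz_sup
    (a b : ℝ) (hab : a ≤ b) (u : ℝ → ℝ) (hu_mono : Monotone u)
    (hu_conv : ConvexOn ℝ Set.univ u) (hu0 : u 0 = 0)
    (μ ν : Measure ℝ) [IsProbabilityMeasure μ] [IsProbabilityMeasure ν]
    (hμ : μ (Set.Icc a b) = 1) (hν : ν (Set.Icc a b) = 1) :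
    OCE u a b μ - OCE u a b ν ≤
      u (b - a) * ⨆ t : ℝ, |(μ (Set.Iic t)).toReal - (ν (Set.Iic t)).toReal| :=
  oce_convex_lipschitz_sup_general a b u hu_mono hu_conv hu0 μ ν hμ hν
end

section
/- Let a ≤ b be real numbers and let u : ℝ → ℝ be differentiable, nondecreasing (so u′ ≥ 0), and concave (so u′ is nonincreasing), with u(0) = 0. For a Borel probability measure μ supported on [a,b], define the optimized certainty equivalent C_u(μ) = sup_{λ ∈ [a,b]} ( λ + ∫_{[a,b]} u(x − λ) dμ(x) ). Then for all Borel probability measures μ, ν supported on [a,b] with CDFs F_μ, F_ν: C_u(μ) − C_u(ν) ≤ u′(a − b) · ∫_ℝ |F_μ(t) − F_ν(t)| dt. -/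
/-!
For `λ ∈ [a, b]`, the fundamental theorem of calculus and Fubini give
`∫ u (x - λ) dμ = u (a - λ) + ∫_a^b u' (t - λ) (1 - F_μ t) dt`, so the two OCE objectives at `λ`
differ by `∫_a^b u' (t - λ) (F_ν t - F_μ t) dt`. As `u'` is nonnegative and nonincreasing and
`t - λ ≥ a - b`, we have `|u' (t - λ)| ≤ u' (a - b)`; taking suprema over `λ` gives the bound.
-/

open MeasureTheory

open ProbabilityTheory Set

section

variable {a b : ℝ}

theorem setIntegral_Icc_eq_mul_add_integral_deriv_mul {f f' : ℝ → ℝ}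
    (hf : ∀ t ∈ Icc a b, HasDerivAt f (f' t) t) (hf' : IntegrableOn f' (Icc a b))
    (μ : Measure ℝ) [IsFiniteMeasure μ] :
    ∫ x in Icc a b, f x ∂μ =
      μ.real (Icc a b) * f a + ∫ t in Ico a b, f' t * μ.real (Icc a b ∩ Ioi t) := by
  set H : ℝ × ℝ → ℝ := {p | p.2 < p.1}.indicator fun p ↦ f' p.2
  have hH : Integrable H ((μ.restrict (Icc a b)).prod (volume.restrict (Ico a b))) :=
    ((hf'.mono_set Ico_subset_Icc_self).comp_snd _).indicator
      (measurableSet_lt measurable_snd measurable_fst)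
  have ftc : ∀ x ∈ Icc a b, f x = f a + ∫ t in Ico a b, H (x, t) := by
    intro x hx
    have hx' : Ico a b ∩ Iio x = Ico a x := by rw [Ico_inter_Iio, min_eq_right hx.2]
    have hderiv : ∀ t ∈ uIcc a x, HasDerivAt f (f' t) t := fun t ht ↦
      hf t (Icc_subset_Icc le_rfl hx.2 (uIcc_of_le hx.1 ▸ ht))
    have hint : IntervalIntegrable f' volume a x :=
      (intervalIntegrable_iff_integrableOn_Icc_of_le hx.1).2
        (hf'.mono_set (Icc_subset_Icc le_rfl hx.2))
    calc f x = f a + ∫ t in a..x, f' t := by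
          rw [intervalIntegral.integral_eq_sub_of_hasDerivAt hderiv hint]; ring
      _ = f a + ∫ t in Ico a b, (Iio x).indicator f' t := by
          rw [setIntegral_indicator measurableSet_Iio, hx', intervalIntegral.integral_of_le hx.1,
            integral_Ico_eq_integral_Ioo, integral_Ioc_eq_integral_Ioo]
      _ = f a + ∫ t in Ico a b, H (x, t) := rfl
  have slice : ∀ t, ∫ x in Icc a b, H (x, t) ∂μ = f' t * μ.real (Icc a b ∩ Ioi t) := fun t ↦ by
    change ∫ x in Icc a b, (Ioi t).indicator (fun _ ↦ f' t) x ∂μ = _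
    rw [setIntegral_indicator measurableSet_Ioi, setIntegral_const, smul_eq_mul, mul_comm]
  calc ∫ x in Icc a b, f x ∂μ = ∫ x in Icc a b, (f a + ∫ t in Ico a b, H (x, t)) ∂μ :=
        setIntegral_congr_fun measurableSet_Icc ftc
    _ = μ.real (Icc a b) * f a + ∫ x in Icc a b, (∫ t in Ico a b, H (x, t)) ∂μ := by
        rw [integral_add (integrable_const _) hH.integral_prod_left, setIntegral_const,
          smul_eq_mul]
    _ = μ.real (Icc a b) * f a + ∫ t in Ico a b, f' t * μ.real (Icc a b ∩ Ioi t) := by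
        rw [integral_integral_swap (f := fun x t ↦ H (x, t)) hH]
        simp only [slice]

section Supported

variable {μ : Measure ℝ} [IsProbabilityMeasure μ]

theorem measureReal_Icc_inter_Ioi_eq_one_sub_cdf (hμ : μ (Icc a b) = 1) (t : ℝ) :
    μ.real (Icc a b ∩ Ioi t) = 1 - cdf μ t := by
  have hnull : μ (Icc a b)ᶜ = 0 := (prob_compl_eq_zero_iff measurableSet_Icc).2 hμ
  rw [measureReal_def, inter_comm, measure_inter_conull hnull, ← compl_Iic, ← measureReal_def,
    probReal_compl_eq_one_sub measurableSet_Iic, cdf_eq_real]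

theorem cdf_eq_zero_of_lt (hμ : μ (Icc a b) = 1) {t : ℝ} (ht : t < a) : cdf μ t = 0 := by
  have hnull : μ (Icc a b)ᶜ = 0 := (prob_compl_eq_zero_iff measurableSet_Icc).2 hμ
  have hsub : Iic t ⊆ (Icc a b)ᶜ := fun x hx hx' ↦ (hx'.1.trans hx).not_gt ht
  rw [cdf_eq_real, measureReal_def, measure_mono_null hsub hnull, ENNReal.toReal_zero]

theorem cdf_eq_one_of_le (hμ : μ (Icc a b) = 1) {t : ℝ} (ht : b ≤ t) : cdf μ t = 1 := by
  refine le_antisymm (cdf_le_one μ t) ?_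
  rw [cdf_eq_real, measureReal_def, ← ENNReal.toReal_one, ← hμ]
  exact ENNReal.toReal_mono (measure_ne_top μ _) (measure_mono fun x hx ↦ hx.2.trans ht)

theorem setIntegral_Icc_eq_add_integral_deriv_mul_one_sub_cdf {f f' : ℝ → ℝ}
    (hf : ∀ t ∈ Icc a b, HasDerivAt f (f' t) t) (hf' : IntegrableOn f' (Icc a b))
    (hμ : μ (Icc a b) = 1) :
    ∫ x in Icc a b, f x ∂μ = f a + ∫ t in Ico a b, f' t * (1 - cdf μ t) := by
  have hμ' : μ.real (Icc a b) = 1 := by rw [measureReal_def, hμ, ENNReal.toReal_one]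
  simp only [setIntegral_Icc_eq_mul_add_integral_deriv_mul hf hf' μ, hμ', one_mul,
    measureReal_Icc_inter_Ioi_eq_one_sub_cdf hμ]

end Supported

theorem setIntegral_sub_le_mul_integral_abs_cdf_sub {f f' : ℝ → ℝ} {L : ℝ}
    (hf : ∀ t ∈ Icc a b, HasDerivAt f (f' t) t) (hf' : IntegrableOn f' (Icc a b))
    (hL : ∀ t ∈ Ico a b, |f' t| ≤ L) (μ ν : Measure ℝ) [IsProbabilityMeasure μ]
    [IsProbabilityMeasure ν] (hμ : μ (Icc a b) = 1) (hν : ν (Icc a b) = 1) :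
    ∫ x in Icc a b, f x ∂μ - ∫ x in Icc a b, f x ∂ν ≤ L * ∫ t, |cdf μ t - cdf ν t| := by
  have hf'Ico : IntegrableOn f' (Ico a b) := hf'.mono_set Ico_subset_Icc_self
  have hint : ∀ (κ : Measure ℝ), IntegrableOn (fun t ↦ f' t * (1 - cdf κ t)) (Ico a b) :=
    fun κ ↦ hf'Ico.mul_bdd (c := 1)
      (measurable_const.sub (monotone_cdf κ).measurable).aestronglyMeasurable
      (Filter.Eventually.of_forall fun t ↦ by
        rw [Real.norm_eq_abs, abs_le]
        constructor <;> linarith [cdf_nonneg κ t, cdf_le_one κ t])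
  have hdist : IntegrableOn (fun t ↦ |cdf μ t - cdf ν t|) (Icc a b) :=
    (((monotone_cdf μ).monotoneOn _).integrableOn_isCompact isCompact_Icc |>.sub
      (((monotone_cdf ν).monotoneOn _).integrableOn_isCompact isCompact_Icc)).abs
  have hsupp : ∫ t in Ico a b, |cdf μ t - cdf ν t| = ∫ t, |cdf μ t - cdf ν t| := by
    refine setIntegral_eq_integral_of_forall_compl_eq_zero fun t ht ↦ ?_
    rcases lt_or_ge t a with hta | hat
    · rw [cdf_eq_zero_of_lt hμ hta, cdf_eq_zero_of_lt hν hta, sub_zero, abs_zero]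
    · have hbt : b ≤ t := not_lt.1 fun htb ↦ ht ⟨hat, htb⟩
      rw [cdf_eq_one_of_le hμ hbt, cdf_eq_one_of_le hν hbt, sub_self, abs_zero]
  calc ∫ x in Icc a b, f x ∂μ - ∫ x in Icc a b, f x ∂ν
      = ∫ t in Ico a b, (f' t * (1 - cdf μ t) - f' t * (1 - cdf ν t)) := by
        rw [setIntegral_Icc_eq_add_integral_deriv_mul_one_sub_cdf hf hf' hμ,
          setIntegral_Icc_eq_add_integral_deriv_mul_one_sub_cdf hf hf' hν,
          integral_sub (hint μ) (hint ν)]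
        ring
    _ ≤ ∫ t in Ico a b, L * |cdf μ t - cdf ν t| := by
        refine setIntegral_mono_on ((hint μ).sub (hint ν))
          ((hdist.mono_set Ico_subset_Icc_self).const_mul L) measurableSet_Ico fun t ht ↦ ?_
        calc f' t * (1 - cdf μ t) - f' t * (1 - cdf ν t) = f' t * (cdf ν t - cdf μ t) := by ring
          _ ≤ |f' t| * |cdf μ t - cdf ν t| := by
              rw [← abs_sub_comm, ← abs_mul]; exact le_abs_self _
          _ ≤ L * |cdf μ t - cdf ν t| := by gcongr; exact hL t ht
    _ = L * ∫ t, |cdf μ t - cdf ν t| := by rw [integral_const_mul, hsupp]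

end

section OCE

variable {u : ℝ → ℝ} {a b : ℝ}

theorem bddAbove_range_add_setIntegral_comp_sub (hu : Monotone u) (hu_cont : Continuous u)
    (ν : Measure ℝ) [IsFiniteMeasure ν] :
    BddAbove (range fun lam : Icc a b ↦ (lam : ℝ) + ∫ x in Icc a b, u (x - lam) ∂ν) := by
  refine ⟨b + ν.real (Icc a b) * u (b - a), ?_⟩
  rintro _ ⟨lam, rfl⟩
  have hle : ∫ x in Icc a b, u (x - lam) ∂ν ≤ ∫ _ in Icc a b, u (b - a) ∂ν :=
    setIntegral_mono_on (hu_cont.comp (continuous_sub_right _)).integrableOn_Icc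
      (integrable_const _) measurableSet_Icc fun x hx ↦ hu (by linarith [hx.2, lam.2.1])
  rw [setIntegral_const, smul_eq_mul] at hle
  linarith [lam.2.2]

theorem OCE_sub_le_of_forall_setIntegral_sub_le {μ ν : Measure ℝ} (hne : (Icc a b).Nonempty)
    (hbdd : BddAbove (range fun lam : Icc a b ↦ (lam : ℝ) + ∫ x in Icc a b, u (x - lam) ∂ν))
    {K : ℝ}
    (h : ∀ lam ∈ Icc a b, ∫ x in Icc a b, u (x - lam) ∂μ - ∫ x in Icc a b, u (x - lam) ∂ν ≤ K) :
    OCE u a b μ - OCE u a b ν ≤ K := by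
  have : Nonempty (Icc a b) := hne.to_subtype
  rw [sub_le_iff_le_add]
  unfold OCE
  refine ciSup_le fun lam ↦ ?_
  linarith [h lam lam.2, le_ciSup hbdd lam]

end OCE

theorem oce_concave_lipschitz_l1_general
    (a b : ℝ) (u : ℝ → ℝ) (hu_diff : Differentiable ℝ u)
    (hu_mono : Monotone u) (hu_conc : ConcaveOn ℝ Set.univ u)
    (μ ν : Measure ℝ) [IsProbabilityMeasure μ] [IsProbabilityMeasure ν]
    (hμ : μ (Set.Icc a b) = 1) (hν : ν (Set.Icc a b) = 1) :
    OCE u a b μ - OCE u a b ν ≤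
      deriv u (a - b) *
        ∫ t : ℝ, |(μ (Set.Iic t)).toReal - (ν (Set.Iic t)).toReal| := by
  have hanti : Antitone (deriv u) :=
    antitoneOn_univ.mp (hu_conc.antitoneOn_deriv fun x _ ↦ hu_diff x)
  have hne : (Icc a b).Nonempty := nonempty_of_measure_ne_zero (μ := μ) (by simp [hμ])
  simp only [← measureReal_def, ← cdf_eq_real]
  refine OCE_sub_le_of_forall_setIntegral_sub_le hne
    (bddAbove_range_add_setIntegral_comp_sub hu_mono hu_diff.continuous ν) fun lam hlam ↦ ?_
  refine setIntegral_sub_le_mul_integral_abs_cdf_sub (f' := fun t ↦ deriv u (t - lam))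
    (fun t _ ↦ (hu_diff _).hasDerivAt.comp_sub_const t lam) ?_ (fun t ht ↦ ?_) μ ν hμ hν
  · exact ((hanti.comp_monotone fun _ _ h ↦ sub_le_sub_right h lam).antitoneOn _)
      |>.integrableOn_isCompact isCompact_Icc
  · rw [abs_of_nonneg hu_mono.deriv_nonneg]
    exact hanti (by linarith [ht.1, hlam.2])

/-- Lipschitz continuity of the OCE with a differentiable, nondecreasing, concave
utility with respect to the ℓ1 distance of CDFs, with Lipschitz constant `u' (a - b)`. -/
theorem oce_concave_lipschitz_l1
    (a b : ℝ) (hab : a ≤ b) (u : ℝ → ℝ) (hu_diff : Differentiable ℝ u)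
    (hu_mono : Monotone u) (hu_conc : ConcaveOn ℝ Set.univ u) (hu0 : u 0 = 0)
    (μ ν : Measure ℝ) [IsProbabilityMeasure μ] [IsProbabilityMeasure ν]
    (hμ : μ (Set.Icc a b) = 1) (hν : ν (Set.Icc a b) = 1) :
    OCE u a b μ - OCE u a b ν ≤
      deriv u (a - b) *
        ∫ t : ℝ, |(μ (Set.Iic t)).toReal - (ν (Set.Iic t)).toReal| :=
  oce_concave_lipschitz_l1_general a b u hu_diff hu_mono hu_conc μ ν hμ hν
end

section
/- Let a ≤ b be real numbers and let u : ℝ → ℝ be differentiable, nondecreasing (so u′ ≥ 0), and convex (so u′ is nondecreasing), with u(0) = 0. For a Borel probability measure μ supported on [a,b], define the optimized certainty equivalent C_u(μ) = sup_{λ ∈ [a,b]} ( λ + ∫_{[a,b]} u(x − λ) dμ(x) ). Then for all Borel probability measures μ, ν supported on [a,b] with CDFs F_μ, F_ν: C_u(μ) − C_u(ν) ≤ u′(b − a) · ∫_ℝ |F_μ(t) − F_ν(t)| dt. -/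
/-! For fixed `λ ∈ [a, b]`, `g = u (· - λ)` has derivative `u' (· - λ)`, which lies in
`[0, u' (b - a)]` on `[a, b]` because `u` is monotone and convex. Fubini applied to
`(x, t) ↦ 1{x ≤ t} g' t` gives `∫ g dμ = g b - ∫_a^b g' F_μ` for a probability measure `μ`
on `[a, b]`. Hence `∫ g dμ - ∫ g dν = ∫_a^b g' (F_ν - F_μ)`, which is at most
`u' (b - a) ‖F_μ - F_ν‖₁` because `F_μ = F_ν` off `[a, b]`; take the supremum over `λ`. -/

open MeasureTheory

open Set

namespace MeasureTheory

variable {a b : ℝ}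

lemma monotone_measureReal_Iic (μ : Measure ℝ) [IsFiniteMeasure μ] :
    Monotone fun t => μ.real (Iic t) :=
  fun _ _ hst => measureReal_mono (Iic_subset_Iic.2 hst)

lemma IntegrableOn.mul_measureReal_Iic {s : Set ℝ} {f : ℝ → ℝ} (hf : IntegrableOn f s)
    (μ : Measure ℝ) [IsFiniteMeasure μ] : IntegrableOn (fun t => f t * μ.real (Iic t)) s :=
  hf.mul_bdd (monotone_measureReal_Iic μ).measurable.aestronglyMeasurable
    (.of_forall fun t => by
      rw [Real.norm_of_nonneg measureReal_nonneg]
      exact measureReal_mono (subset_univ _))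

lemma measureReal_Iic_eq_zero_of_lt {μ : Measure ℝ} {t : ℝ} (hμ : ∀ᵐ x ∂μ, x ∈ Icc a b)
    (ht : t < a) : μ.real (Iic t) = 0 := by
  have : μ (Iic t) = 0 := measure_eq_zero_iff_ae_notMem.2
    (hμ.mono fun x hx (hxt : x ≤ t) => (ht.trans_le hx.1).not_ge hxt)
  rw [measureReal_def, this, ENNReal.toReal_zero]

lemma measureReal_Iic_eq_one_of_le {μ : Measure ℝ} [IsProbabilityMeasure μ] {t : ℝ}
    (hμ : ∀ᵐ x ∂μ, x ∈ Icc a b) (ht : b ≤ t) : μ.real (Iic t) = 1 := by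
  rw [measureReal_def, (ae_mem_iff_measure_eq measurableSet_Iic.nullMeasurableSet).1
    (hμ.mono fun x hx => hx.2.trans ht)]
  simp

lemma measureReal_Iic_eq_of_notMem_Icc {μ ν : Measure ℝ} [IsProbabilityMeasure μ]
    [IsProbabilityMeasure ν] {t : ℝ} (hμ : ∀ᵐ x ∂μ, x ∈ Icc a b) (hν : ∀ᵐ x ∂ν, x ∈ Icc a b)
    (ht : t ∉ Icc a b) : μ.real (Iic t) = ν.real (Iic t) := by
  rcases not_and_or.1 ht with ht | ht
  · rw [measureReal_Iic_eq_zero_of_lt hμ (not_le.1 ht),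
      measureReal_Iic_eq_zero_of_lt hν (not_le.1 ht)]
  · rw [measureReal_Iic_eq_one_of_le hμ (not_le.1 ht).le,
      measureReal_Iic_eq_one_of_le hν (not_le.1 ht).le]

variable {g g' : ℝ → ℝ}

lemma setIntegral_Icc_indicator_Ici_eq_sub (hg : ∀ x ∈ Icc a b, HasDerivAt g (g' x) x)
    (hg' : IntegrableOn g' (Icc a b)) {x : ℝ} (hx : x ∈ Icc a b) :
    ∫ t in Icc a b, (Ici x).indicator g' t = g b - g x := by
  have hsub : uIcc x b ⊆ Icc a b := uIcc_of_le hx.2 ▸ Icc_subset_Icc_left hx.1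
  have hinter : Ici x ∩ Icc a b = Icc x b :=
    ext fun t => ⟨fun ht => ⟨ht.1, ht.2.2⟩, fun ht => ⟨ht.1, hx.1.trans ht.1, ht.2⟩⟩
  rw [setIntegral_indicator measurableSet_Ici, inter_comm, hinter, integral_Icc_eq_integral_Ioc,
    ← intervalIntegral.integral_of_le hx.2]
  exact intervalIntegral.integral_eq_sub_of_hasDerivAt (fun t ht => hg t (hsub ht))
    (hg'.mono_set hsub).intervalIntegrable

lemma integral_eq_mul_sub_setIntegral_deriv_mul_cdf (hg : ∀ x ∈ Icc a b, HasDerivAt g (g' x) x)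
    (hg' : IntegrableOn g' (Icc a b)) (μ : Measure ℝ) [IsFiniteMeasure μ]
    (hμ : ∀ᵐ x ∂μ, x ∈ Icc a b) :
    ∫ x, g x ∂μ = μ.real univ * g b - ∫ t in Icc a b, g' t * μ.real (Iic t) := by
  have hg_int : Integrable g μ := by
    rw [← Measure.restrict_eq_self_of_ae_mem hμ]
    exact ContinuousOn.integrableOn_compact isCompact_Icc
      fun x hx => (hg x hx).continuousAt.continuousWithinAt
  have hf : Integrable (Function.uncurry fun x t => (Ici x).indicator g' t)
      (μ.prod (volume.restrict (Icc a b))) :=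
    (hg'.comp_snd μ).indicator (measurableSet_le measurable_fst measurable_snd)
  have h_inner : ∀ t, ∫ x, (Ici x).indicator g' t ∂μ = g' t * μ.real (Iic t) := fun t => by
    have : (fun x => (Ici x).indicator g' t) = (Iic t).indicator fun _ => g' t := by
      ext x; by_cases h : x ≤ t <;> simp [h]
    rw [this, integral_indicator_const _ measurableSet_Iic, smul_eq_mul, mul_comm]
  calc ∫ x, g x ∂μ = μ.real univ * g b - ∫ x, (g b - g x) ∂μ := by
        rw [integral_sub (integrable_const _) hg_int, integral_const, smul_eq_mul]; ring
    _ = μ.real univ * g b - ∫ x, (∫ t in Icc a b, (Ici x).indicator g' t) ∂μ := by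
        rw [integral_congr_ae (hμ.mono fun x hx => setIntegral_Icc_indicator_Ici_eq_sub hg hg' hx)]
    _ = μ.real univ * g b - ∫ t in Icc a b, g' t * μ.real (Iic t) := by
        rw [integral_integral_swap hf]; simp only [h_inner]

variable {μ ν : Measure ℝ} [IsProbabilityMeasure μ] [IsProbabilityMeasure ν]

lemma integral_sub_integral_eq_setIntegral_deriv_mul_cdf_sub
    (hg : ∀ x ∈ Icc a b, HasDerivAt g (g' x) x) (hg' : IntegrableOn g' (Icc a b))
    (hμ : ∀ᵐ x ∂μ, x ∈ Icc a b) (hν : ∀ᵐ x ∂ν, x ∈ Icc a b) :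
    ∫ x, g x ∂μ - ∫ x, g x ∂ν = ∫ t in Icc a b, g' t * (ν.real (Iic t) - μ.real (Iic t)) := by
  simp only [mul_sub]
  rw [integral_eq_mul_sub_setIntegral_deriv_mul_cdf hg hg' μ hμ,
    integral_eq_mul_sub_setIntegral_deriv_mul_cdf hg hg' ν hν,
    integral_sub (hg'.mul_measureReal_Iic ν) (hg'.mul_measureReal_Iic μ), probReal_univ,
    probReal_univ]
  ring

theorem integral_sub_integral_le_mul_integral_abs_cdf_sub {L : ℝ}
    (hg : ∀ x ∈ Icc a b, HasDerivAt g (g' x) x) (hg' : IntegrableOn g' (Icc a b))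
    (hL : ∀ t ∈ Icc a b, |g' t| ≤ L) (hμ : ∀ᵐ x ∂μ, x ∈ Icc a b) (hν : ∀ᵐ x ∂ν, x ∈ Icc a b) :
    ∫ x, g x ∂μ - ∫ x, g x ∂ν ≤ L * ∫ t, |μ.real (Iic t) - ν.real (Iic t)| := by
  have hcdf_int (ρ : Measure ℝ) [IsFiniteMeasure ρ] :
      IntegrableOn (fun t => ρ.real (Iic t)) (Icc a b) :=
    (monotone_measureReal_Iic ρ).monotoneOn _ |>.integrableOn_isCompact isCompact_Icc
  calc ∫ x, g x ∂μ - ∫ x, g x ∂ν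
      = ∫ t in Icc a b, g' t * (ν.real (Iic t) - μ.real (Iic t)) :=
        integral_sub_integral_eq_setIntegral_deriv_mul_cdf_sub hg hg' hμ hν
    _ ≤ ∫ t in Icc a b, L * |μ.real (Iic t) - ν.real (Iic t)| := by
        refine setIntegral_mono_on ?_ (((hcdf_int μ).sub (hcdf_int ν)).abs.const_mul L)
          measurableSet_Icc fun t ht => ?_
        · simpa only [mul_sub, Pi.sub_def] using
            (hg'.mul_measureReal_Iic ν).sub (hg'.mul_measureReal_Iic μ)
        · calc _ ≤ |g' t| * |ν.real (Iic t) - μ.real (Iic t)| := by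
                rw [← abs_mul]; exact le_abs_self _
            _ ≤ L * |μ.real (Iic t) - ν.real (Iic t)| := by
                rw [abs_sub_comm]; gcongr; exact hL t ht
    _ = L * ∫ t, |μ.real (Iic t) - ν.real (Iic t)| := by
        rw [integral_const_mul, setIntegral_eq_integral_of_forall_compl_eq_zero fun t ht => by
          rw [measureReal_Iic_eq_of_notMem_Icc hμ hν ht, sub_self, abs_zero]]

end MeasureTheory

lemma bddAbove_range_oce {u : ℝ → ℝ} (hu : Monotone u) (a b : ℝ) (ν : Measure ℝ)
    [IsFiniteMeasure ν] :
    BddAbove (range fun lam : Icc a b => (lam : ℝ) + ∫ x in Icc a b, u (x - lam) ∂ν) := by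
  refine ⟨b + ν.real (Icc a b) * u (b - a), ?_⟩
  rintro _ ⟨lam, rfl⟩
  have hint : IntegrableOn (fun x => u (x - lam)) (Icc a b) ν :=
    (hu.comp fun _ _ h => sub_le_sub_right h _).monotoneOn _ |>.integrableOn_isCompact
      isCompact_Icc
  have := setIntegral_mono_on hint (integrableOn_const (C := u (b - a))) measurableSet_Icc
    fun x hx => hu (by linarith [lam.2.1, hx.2])
  rw [setIntegral_const, smul_eq_mul] at this
  linarith [lam.2.2]

theorem oce_convex_lipschitz_l1_general
    (a b : ℝ) (hab : a ≤ b) (u : ℝ → ℝ) (hu_diff : Differentiable ℝ u)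
    (hu_mono : Monotone u) (hu_conv : ConvexOn ℝ Set.univ u)
    (μ ν : Measure ℝ) [IsProbabilityMeasure μ] [IsProbabilityMeasure ν]
    (hμ : μ (Set.Icc a b) = 1) (hν : ν (Set.Icc a b) = 1) :
    OCE u a b μ - OCE u a b ν ≤
      deriv u (b - a) *
        ∫ t : ℝ, |(μ (Set.Iic t)).toReal - (ν (Set.Iic t)).toReal| := by
  have : Nonempty (Icc a b) := (nonempty_Icc.2 hab).to_subtype
  have hμ' : ∀ᵐ x ∂μ, x ∈ Icc a b := mem_ae_iff.2 ((prob_compl_eq_zero_iff measurableSet_Icc).2 hμ)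
  have hν' : ∀ᵐ x ∂ν, x ∈ Icc a b := mem_ae_iff.2 ((prob_compl_eq_zero_iff measurableSet_Icc).2 hν)
  have hu' : Monotone (deriv u) := monotoneOn_univ.1 (hu_conv.monotoneOn_deriv fun x _ => hu_diff x)
  rw [sub_le_iff_le_add]
  refine ciSup_le fun lam => ?_
  have hlip : ∫ x, u (x - lam) ∂μ - ∫ x, u (x - lam) ∂ν ≤
      deriv u (b - a) * ∫ t : ℝ, |(μ (Set.Iic t)).toReal - (ν (Set.Iic t)).toReal| :=
    integral_sub_integral_le_mul_integral_abs_cdf_sub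
      (fun x _ => (hu_diff _).hasDerivAt.comp_sub_const x lam)
      ((hu'.comp fun _ _ h => sub_le_sub_right h _).monotoneOn _ |>.integrableOn_isCompact
        isCompact_Icc)
      (fun t ht => by
        rw [abs_of_nonneg hu_mono.deriv_nonneg]
        exact hu' (by linarith [lam.2.1, ht.2]))
      hμ' hν'
  have hν_le : (lam : ℝ) + ∫ x in Icc a b, u (x - lam) ∂ν ≤ OCE u a b ν :=
    le_ciSup (bddAbove_range_oce hu_mono a b ν) lam
  rw [Measure.restrict_eq_self_of_ae_mem hμ']
  rw [Measure.restrict_eq_self_of_ae_mem hν'] at hν_le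
  linarith

/-- Lipschitz continuity of the OCE with a differentiable, nondecreasing, convex
utility with respect to the ℓ1 distance of CDFs, with Lipschitz constant `u' (b - a)`. -/
theorem oce_convex_lipschitz_l1
    (a b : ℝ) (hab : a ≤ b) (u : ℝ → ℝ) (hu_diff : Differentiable ℝ u)
    (hu_mono : Monotone u) (hu_conv : ConvexOn ℝ Set.univ u) (hu0 : u 0 = 0)
    (μ ν : Measure ℝ) [IsProbabilityMeasure μ] [IsProbabilityMeasure ν]
    (hμ : μ (Set.Icc a b) = 1) (hν : ν (Set.Icc a b) = 1) :
    OCE u a b μ - OCE u a b ν ≤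
      deriv u (b - a) *
        ∫ t : ℝ, |(μ (Set.Iic t)).toReal - (ν (Set.Iic t)).toReal| :=
  oce_convex_lipschitz_l1_general a b hab u hu_diff hu_mono hu_conv μ ν hμ hν
end

section
/- Let a ≤ b be real numbers and let α ∈ (0,1]. For a Borel probability measure μ supported on [a,b], define CVaR_α(μ) = sup_{ν ∈ ℝ} ( ν − (1/α) ∫_{[a,b]} max(ν − x, 0) dμ(x) ). Then for all Borel probability measures μ, ν supported on [a,b] with CDFs F_μ, F_ν: |CVaR_α(μ) − CVaR_α(ν)| ≤ (1/α) · ∫_ℝ |F_μ(t) − F_ν(t)| dt. -/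
/-! By the layer-cake formula, `∫ (v - x)⁺ dμ(x) = ∫_{-∞}^v F_μ`, so for every `v` the
objectives defining `CVaR_α(μ)` and `CVaR_α(ν)` differ by at most `(1/α) ‖F_μ - F_ν‖₁`, and
taking suprema preserves a uniform bound on the difference. -/

open MeasureTheory

noncomputable def CVaR (α a b : ℝ) (μ : Measure ℝ) : ℝ :=
  ⨆ v : ℝ, (v - (1 / α) * ∫ x in Set.Icc a b, max (v - x) 0 ∂μ)

open Set

/-- No boundedness is needed: `f` is bounded above iff `g` is, and otherwise both suprema are
the junk value `0`. -/
theorem abs_ciSup_sub_ciSup_le {ι : Sort*} [Nonempty ι] {f g : ι → ℝ} {K : ℝ}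
    (h : ∀ i, |f i - g i| ≤ K) : |(⨆ i, f i) - ⨆ i, g i| ≤ K := by
  have hfg : ∀ i, f i ≤ K + g i := fun i => by linarith [(abs_le.1 (h i)).2]
  have hgf : ∀ i, g i ≤ K + f i := fun i => by linarith [(abs_le.1 (h i)).1]
  have bddAbove_of_le {f g : ι → ℝ} (hle : ∀ i, f i ≤ K + g i) (hg : BddAbove (range g)) :
      BddAbove (range f) := by
    obtain ⟨M, hM⟩ := hg
    exact ⟨K + M, forall_mem_range.2 fun i => (hle i).trans (by grw [hM (mem_range_self i)])⟩
  by_cases hf : BddAbove (range f)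
  · have hg := bddAbove_of_le hgf hf
    rw [abs_sub_le_iff, sub_le_iff_le_add, sub_le_iff_le_add]
    exact ⟨ciSup_le fun i => (hfg i).trans (add_le_add_right (le_ciSup hg i) K),
      ciSup_le fun i => (hgf i).trans (add_le_add_right (le_ciSup hf i) K)⟩
  · have hg : ¬BddAbove (range g) := fun hg => hf (bddAbove_of_le hfg hg)
    rw [Real.iSup_of_not_bddAbove hf, Real.iSup_of_not_bddAbove hg, sub_zero, abs_zero]
    exact (abs_nonneg _).trans (h (Classical.arbitrary ι))

theorem integral_max_sub_eq_setIntegral_measureReal_Iic {μ : Measure ℝ} {v : ℝ}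
    (h : Integrable (fun x => max (v - x) 0) μ) :
    ∫ x, max (v - x) 0 ∂μ = ∫ t in Iic v, μ.real (Iic t) := by
  rw [h.integral_eq_integral_meas_le (.of_forall fun x => le_max_right _ _)]
  have hlevel : ∀ t ∈ Ioi (0 : ℝ), μ.real {x | t ≤ max (v - x) 0} = μ.real (Iic (v - t)) := by
    intro t ht
    congr 1
    ext x
    simp [not_le.2 (mem_Ioi.1 ht), le_sub_comm]
  have hpre : (fun t => v - t) ⁻¹' Iic v = Ici 0 := by ext; simp
  rw [setIntegral_congr_fun measurableSet_Ioi hlevel, ← integral_Ici_eq_integral_Ioi, ← hpre]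
  exact (Measure.measurePreserving_sub_left volume v).setIntegral_preimage_emb
    (measurableEmbedding_subLeft v) (fun t => μ.real (Iic t)) _

section Support

variable {μ ν : Measure ℝ} {a b : ℝ}

theorem monotone_measureReal_Iic [IsFiniteMeasure μ] : Monotone fun t => μ.real (Iic t) :=
  fun _ _ hst => measureReal_mono (Iic_subset_Iic.2 hst)

theorem measureReal_Iic_of_lt (hμ : ∀ᵐ x ∂μ, a ≤ x) {t : ℝ} (ht : t < a) :
    μ.real (Iic t) = 0 := by
  have : μ (Iic t) = 0 :=
    measure_eq_zero_iff_ae_notMem.2 (hμ.mono fun _ hx hxt => (ht.trans_le hx).not_ge hxt)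
  simp [Measure.real, this]

theorem measureReal_Iic_of_le [IsProbabilityMeasure μ] (hμ : ∀ᵐ x ∂μ, x ≤ b) {t : ℝ}
    (ht : b ≤ t) : μ.real (Iic t) = 1 := by
  have : μ (Iic t) = 1 :=
    (mem_ae_iff_prob_eq_one measurableSet_Iic).1 (hμ.mono fun _ hx => hx.trans ht)
  simp [Measure.real, this]

theorem integrableOn_Icc_measureReal_Iic [IsFiniteMeasure μ] :
    IntegrableOn (fun t => μ.real (Iic t)) (Icc a b) :=
  (monotone_measureReal_Iic.monotoneOn _).integrableOn_isCompact isCompact_Icc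

theorem integrableOn_Iic_measureReal_Iic [IsFiniteMeasure μ] (hμ : ∀ᵐ x ∂μ, a ≤ x) (v : ℝ) :
    IntegrableOn (fun t => μ.real (Iic t)) (Iic v) := by
  have hzero : IntegrableOn (fun t => μ.real (Iic t)) (Iio a) :=
    integrableOn_zero.congr_fun (fun _ ht => (measureReal_Iic_of_lt hμ ht).symm) measurableSet_Iio
  refine (hzero.union (integrableOn_Icc_measureReal_Iic (a := a) (b := v))).mono_set fun t ht => ?_
  rcases lt_or_ge t a with hta | hat
  · exact Or.inl hta
  · exact Or.inr ⟨hat, ht⟩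

theorem integrable_abs_sub_measureReal_Iic [IsProbabilityMeasure μ] [IsProbabilityMeasure ν]
    (hμ : ∀ᵐ x ∂μ, x ∈ Icc a b) (hν : ∀ᵐ x ∂ν, x ∈ Icc a b) :
    Integrable fun t => |μ.real (Iic t) - ν.real (Iic t)| := by
  refine (integrableOn_iff_integrable_of_support_subset (s := Icc a b) fun t ht => ?_).1
    (integrableOn_Icc_measureReal_Iic.sub integrableOn_Icc_measureReal_Iic).abs
  by_contra hout
  rcases not_and_or.1 hout with hta | htb
  · rw [not_le] at hta
    simp [measureReal_Iic_of_lt (hμ.mono fun _ hx => hx.1) hta,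
      measureReal_Iic_of_lt (hν.mono fun _ hx => hx.1) hta] at ht
  · rw [not_le] at htb
    simp [measureReal_Iic_of_le (hμ.mono fun _ hx => hx.2) htb.le,
      measureReal_Iic_of_le (hν.mono fun _ hx => hx.2) htb.le] at ht

theorem integrable_max_sub [IsFiniteMeasure μ] (hμ : ∀ᵐ x ∂μ, a ≤ x) (v : ℝ) :
    Integrable (fun x => max (v - x) 0) μ :=
  .of_bound (by fun_prop) (max (v - a) 0) <| hμ.mono fun x hx => by
    rw [Real.norm_of_nonneg (le_max_right _ _)]
    exact max_le_max (by linarith) le_rfl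

theorem abs_integral_max_sub_sub_le [IsProbabilityMeasure μ] [IsProbabilityMeasure ν]
    (hμ : ∀ᵐ x ∂μ, x ∈ Icc a b) (hν : ∀ᵐ x ∂ν, x ∈ Icc a b) (v : ℝ) :
    |∫ x, max (v - x) 0 ∂μ - ∫ x, max (v - x) 0 ∂ν| ≤
      ∫ t, |μ.real (Iic t) - ν.real (Iic t)| := by
  have hμa : ∀ᵐ x ∂μ, a ≤ x := hμ.mono fun _ hx => hx.1
  have hνa : ∀ᵐ x ∂ν, a ≤ x := hν.mono fun _ hx => hx.1
  rw [integral_max_sub_eq_setIntegral_measureReal_Iic (integrable_max_sub hμa v),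
    integral_max_sub_eq_setIntegral_measureReal_Iic (integrable_max_sub hνa v),
    ← integral_sub (integrableOn_Iic_measureReal_Iic hμa v)
      (integrableOn_Iic_measureReal_Iic hνa v)]
  calc _ ≤ ∫ t in Iic v, |μ.real (Iic t) - ν.real (Iic t)| := abs_integral_le_integral_abs
    _ ≤ _ := setIntegral_le_integral (integrable_abs_sub_measureReal_Iic hμ hν)
        (.of_forall fun _ => abs_nonneg _)

end Support

theorem cvar_lipschitz_l1_general
    (a b : ℝ) (α : ℝ) (hα : α ∈ Set.Ioc (0 : ℝ) 1)
    (μ ν : Measure ℝ) [IsProbabilityMeasure μ] [IsProbabilityMeasure ν]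
    (hμ : μ (Set.Icc a b) = 1) (hν : ν (Set.Icc a b) = 1) :
    |CVaR α a b μ - CVaR α a b ν| ≤
      (1 / α) * ∫ t : ℝ, |(μ (Set.Iic t)).toReal - (ν (Set.Iic t)).toReal| := by
  have hμ' : ∀ᵐ x ∂μ, x ∈ Icc a b := (mem_ae_iff_prob_eq_one measurableSet_Icc).2 hμ
  have hν' : ∀ᵐ x ∂ν, x ∈ Icc a b := (mem_ae_iff_prob_eq_one measurableSet_Icc).2 hν
  have hc : 0 < 1 / α := one_div_pos.2 hα.1
  unfold CVaR
  rw [Measure.restrict_eq_self_of_ae_mem hμ', Measure.restrict_eq_self_of_ae_mem hν']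
  refine abs_ciSup_sub_ciSup_le fun v => ?_
  rw [sub_sub_sub_cancel_left, ← mul_sub, abs_mul, abs_of_pos hc, abs_sub_comm]
  exact mul_le_mul_of_nonneg_left (abs_integral_max_sub_sub_le hμ' hν' v) hc.le

/-- Lipschitz continuity of CVaR at level `α ∈ (0, 1]` with respect to the ℓ1 distance
of CDFs, with Lipschitz constant `1 / α`. -/
theorem cvar_lipschitz_l1
    (a b : ℝ) (hab : a ≤ b) (α : ℝ) (hα : α ∈ Set.Ioc (0 : ℝ) 1)
    (μ ν : Measure ℝ) [IsProbabilityMeasure μ] [IsProbabilityMeasure ν]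
    (hμ : μ (Set.Icc a b) = 1) (hν : ν (Set.Icc a b) = 1) :
    |CVaR α a b μ - CVaR α a b ν| ≤
      (1 / α) * ∫ t : ℝ, |(μ (Set.Iic t)).toReal - (ν (Set.Iic t)).toReal| :=
  cvar_lipschitz_l1_general a b α hα μ ν hμ hν
end

section
/- Let n ≥ 2, let P ∈ ℝ^n be a probability vector, and let c > 0 satisfy P_n + c/2 ≤ 1. Let l be the least index i ∈ {1,…,n} with ∑_{j=1}^i P_j ≥ c/2 (which exists and satisfies l ≤ n−1). Define P̃ ∈ ℝ^n by: P̃_i = 0 for i < l; P̃_l = ∑_{j=1}^l P_j − c/2; P̃_i = P_i for l < i ≤ n−1; and P̃_n = P_n + c/2. Then P̃ is a probability vector, and for every probability vector Q ∈ ℝ^n with ∑_{j=1}^n |P_j − Q_j| ≤ c and every i with 1 ≤ i ≤ n, one has ∑_{j=1}^i P̃_j ≤ ∑_{j=1}^i Q_j. -/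
open Finset

/-! Two facts drive the proof. Prefix sums of `P̃` are `0` before `l`, `∑_{j ≤ i} P_j - c/2`
from `l` to `n - 1`, and `1` at `n`. And if `P` and `Q` have the same total mass, then on any
set of indices `P` exceeds `Q` by at most half their ℓ1 distance, since the excess on the set
is matched by a deficit on its complement. -/

theorem sum_Icc_one_eq_of_succ {M : Type*} [AddCommMonoid M] {f F : ℕ → M} {n : ℕ}
    (h0 : F 0 = 0) (hsucc : ∀ i < n, F (i + 1) = F i + f (i + 1)) :
    ∀ i ≤ n, ∑ j ∈ Icc 1 i, f j = F i := by
  intro i hi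
  induction i with
  | zero => simp [h0]
  | succ i ih => rw [sum_Icc_succ_top (by omega), ih (by omega), hsucc i (by omega)]

theorem sum_sub_sum_le_half_sum_abs_sub {ι : Type*} [DecidableEq ι] {s u : Finset ι}
    (hsu : s ⊆ u) {P Q : ι → ℝ} (hPQ : ∑ j ∈ u, P j = ∑ j ∈ u, Q j) :
    ∑ j ∈ s, P j - ∑ j ∈ s, Q j ≤ (∑ j ∈ u, |P j - Q j|) / 2 := by
  have hP := sum_sdiff hsu (f := P)
  have hQ := sum_sdiff hsu (f := Q)
  have hPQ_abs := sum_sdiff hsu (f := fun j => |P j - Q j|)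
  have hs : ∑ j ∈ s, (P j - Q j) ≤ ∑ j ∈ s, |P j - Q j| :=
    sum_le_sum fun j _ => le_abs_self _
  have hcompl : ∑ j ∈ u \ s, (Q j - P j) ≤ ∑ j ∈ u \ s, |P j - Q j| :=
    sum_le_sum fun j _ => abs_sub_comm (P j) (Q j) ▸ le_abs_self _
  rw [sum_sub_distrib] at hs hcompl
  linarith

theorem le_sub_one_of_minimal_sum_Icc_ge {n l : ℕ} (hn : 2 ≤ n) {P : ℕ → ℝ} {c : ℝ}
    (hP1 : ∑ j ∈ Icc 1 n, P j = 1) (hPn : P n + c / 2 ≤ 1) (hln : l ≤ n)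
    (hl_min : ∀ i ∈ Icc 1 n, c / 2 ≤ ∑ j ∈ Icc 1 i, P j → l ≤ i) :
    l ≤ n - 1 := by
  obtain ⟨m, rfl⟩ : ∃ m, n = m + 1 := ⟨n - 1, by omega⟩
  rw [sum_Icc_succ_top (by omega)] at hP1
  exact hl_min m (mem_Icc.2 ⟨by omega, by omega⟩) (by linarith)

theorem sum_Icc_one_optimistic_eq {n l : ℕ} {P Pt : ℕ → ℝ} {c : ℝ}
    (hP1 : ∑ j ∈ Icc 1 n, P j = 1) (hl1 : 1 ≤ l) (hln : l ≤ n - 1)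
    (hPt : ∀ i ∈ Icc 1 n, Pt i =
      if i < l then 0
      else if i = l then (∑ j ∈ Icc 1 l, P j) - c / 2
      else if i = n then P n + c / 2
      else P i) :
    ∀ i ≤ n, ∑ j ∈ Icc 1 i, Pt j =
      if i < l then 0 else if i = n then 1 else (∑ j ∈ Icc 1 i, P j) - c / 2 := by
  refine sum_Icc_one_eq_of_succ (if_pos (by omega)) fun i hi => ?_
  have hS : ∑ j ∈ Icc 1 (i + 1), P j = ∑ j ∈ Icc 1 i, P j + P (i + 1) :=
    sum_Icc_succ_top (by omega) P
  rw [hPt (i + 1) (mem_Icc.2 ⟨by omega, hi⟩)]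
  split_ifs <;> subst_vars <;> first | omega | linarith

/-- Correctness of the optimistic-model construction (subroutine `OM`, Case 1):
given a probability vector `P` (indexed by `1, …, n`) with `P n + c/2 ≤ 1`, letting
`l` be the least index whose prefix sum reaches `c/2`, the vector `P̃` that removes
mass `c/2` from the leftmost entries and adds it to the last entry satisfies
`l ≤ n - 1`, is a probability vector, and its prefix sums are dominated by those of
every probability vector `Q` within ℓ1 distance `c` of `P`. -/
theorem om_optimistic_model
    (n : ℕ) (hn : 2 ≤ n) (P : ℕ → ℝ)
    (hP0 : ∀ j ∈ Finset.Icc 1 n, 0 ≤ P j) (hP1 : ∑ j ∈ Finset.Icc 1 n, P j = 1)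
    (c : ℝ) (hc : 0 < c) (hPn : P n + c / 2 ≤ 1)
    (l : ℕ) (hl_mem : l ∈ Finset.Icc 1 n)
    (hl_ge : c / 2 ≤ ∑ j ∈ Finset.Icc 1 l, P j)
    (hl_min : ∀ i ∈ Finset.Icc 1 n, c / 2 ≤ ∑ j ∈ Finset.Icc 1 i, P j → l ≤ i)
    (Pt : ℕ → ℝ)
    (hPt : ∀ i ∈ Finset.Icc 1 n, Pt i =
      if i < l then 0
      else if i = l then (∑ j ∈ Finset.Icc 1 l, P j) - c / 2
      else if i = n then P n + c / 2
      else P i) :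
    l ≤ n - 1 ∧
    (∀ i ∈ Finset.Icc 1 n, 0 ≤ Pt i) ∧
    (∑ i ∈ Finset.Icc 1 n, Pt i = 1) ∧
    (∀ Q : ℕ → ℝ, (∀ j ∈ Finset.Icc 1 n, 0 ≤ Q j) →
      (∑ j ∈ Finset.Icc 1 n, Q j = 1) →
      (∑ j ∈ Finset.Icc 1 n, |P j - Q j| ≤ c) →
      ∀ i ∈ Finset.Icc 1 n, ∑ j ∈ Finset.Icc 1 i, Pt j ≤ ∑ j ∈ Finset.Icc 1 i, Q j) := by
  obtain ⟨hl1, hln⟩ := mem_Icc.1 hl_mem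
  have hl : l ≤ n - 1 := le_sub_one_of_minimal_sum_Icc_ge hn hP1 hPn hln hl_min
  have hprefix := sum_Icc_one_optimistic_eq hP1 hl1 hl hPt
  refine ⟨hl, fun i hi => ?_, ?_, fun Q hQ0 hQ1 hdist i hi => ?_⟩
  · rw [hPt i hi]
    split_ifs
    · exact le_rfl
    · linarith
    · linarith [hP0 n (mem_Icc.2 ⟨by omega, le_rfl⟩)]
    · exact hP0 i hi
  · simpa [show ¬n < l by omega] using hprefix n le_rfl
  · obtain ⟨-, hin⟩ := mem_Icc.1 hi
    rw [hprefix i hin]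
    split_ifs with hil hi_n
    · exact sum_nonneg fun j hj => hQ0 j (Icc_subset_Icc_right hin hj)
    · rw [hi_n, hQ1]
    · have := sum_sub_sum_le_half_sum_abs_sub (Icc_subset_Icc_right hin) (hP1.trans hQ1.symm)
      linarith
end

section
/- Let X be a finite set with |X| = m, let K ≥ 1, and let z_1, …, z_K be a sequence of elements of X. For each k ∈ {1,…,K} let N_k = |{ j < k : z_j = z_k }| be the number of earlier occurrences of z_k. Then ∑_{k=1}^K 1/√(max(N_k, 1)) ≤ m + 2√(m·K). -/
open Finset

/-!
Group the times `k` by the visited point `x`. If `x` is visited `c x` times, the visiting counts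
along its visits are `0, 1, …, c x - 1`, so its contribution is
`∑_{i < c x} 1 / √(max i 1) ≤ 1 + 2 √(c x)`, since `1 / √(i + 1) ≤ 2 (√(i + 1) - √i)`
telescopes. Summing over `x` and applying Cauchy–Schwarz to `∑ₓ √(c x)` with `∑ₓ c x = K`
gives `m + 2 √(m K)`.
-/

theorem sum_comp_card_filter_lt {α M : Type*} [LinearOrder α] [AddCommMonoid M]
    (s : Finset α) (f : ℕ → M) :
    ∑ a ∈ s, f #{b ∈ s | b < a} = ∑ i ∈ range #s, f i := by
  induction s using Finset.induction_on_max with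
  | empty => simp
  | insert a s hlt ih =>
    have ha : a ∉ s := fun h => lt_irrefl a (hlt a h)
    have below_a : {b ∈ insert a s | b < a} = s := by
      rw [filter_insert, if_neg (lt_irrefl a), filter_true_of_mem hlt]
    have below_of_mem : ∀ c ∈ s, {b ∈ insert a s | b < c} = {b ∈ s | b < c} := by
      intro c hc
      rw [filter_insert, if_neg (hlt c hc).not_gt]
    rw [sum_insert ha, card_insert_of_notMem ha, sum_range_succ, add_comm, below_a, ← ih,
      sum_congr rfl fun c hc => by rw [below_of_mem c hc]]

theorem sum_range_comp_card_earlier_eq {X M : Type*} [Fintype X] [DecidableEq X]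
    [AddCommMonoid M] (z : ℕ → X) (K : ℕ) (f : ℕ → M) :
    ∑ k ∈ range K, f #{j ∈ range k | z j = z k} =
      ∑ x, ∑ i ∈ range #{k ∈ range K | z k = x}, f i := by
  rw [← sum_fiberwise (range K) z]
  refine sum_congr rfl fun x _ => ?_
  rw [← sum_comp_card_filter_lt]
  refine sum_congr rfl fun k hk => ?_
  obtain ⟨hkK, rfl⟩ := mem_filter.mp hk
  congr 2
  ext j
  simp only [mem_filter, mem_range] at hkK ⊢
  constructor
  · rintro ⟨hjk, hz⟩
    exact ⟨⟨by omega, hz⟩, hjk⟩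
  · rintro ⟨⟨_, hz⟩, hjk⟩
    exact ⟨hjk, hz⟩

theorem one_div_sqrt_add_one_le {x : ℝ} (hx : 0 ≤ x) :
    1 / √(x + 1) ≤ 2 * (√(x + 1) - √x) := by
  have hpos : 0 < √(x + 1) := Real.sqrt_pos.mpr (by linarith)
  rw [div_le_iff₀ hpos]
  nlinarith [Real.mul_self_sqrt hx, Real.mul_self_sqrt (show 0 ≤ x + 1 by linarith),
    sq_nonneg (√(x + 1) - √x)]

theorem sum_range_succ_one_div_sqrt_max_one_le (n : ℕ) :
    ∑ i ∈ range (n + 1), 1 / √(max (i : ℝ) 1) ≤ 1 + 2 * √n := by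
  induction n with
  | zero => simp
  | succ n ih =>
    rw [sum_range_succ, max_eq_left (by simp)]
    have := one_div_sqrt_add_one_le (Nat.cast_nonneg (α := ℝ) n)
    push_cast at this ⊢
    linarith

theorem sum_range_one_div_sqrt_max_one_le (n : ℕ) :
    ∑ i ∈ range n, 1 / √(max (i : ℝ) 1) ≤ 1 + 2 * √n := by
  cases n with
  | zero => simp
  | succ n =>
    refine (sum_range_succ_one_div_sqrt_max_one_le n).trans ?_
    gcongr
    simp

theorem sum_sqrt_le_sqrt_card_mul_sum {ι : Type*} (s : Finset ι) {f : ι → ℝ}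
    (hf : ∀ i, 0 ≤ f i) :
    ∑ i ∈ s, √(f i) ≤ √(#s * ∑ i ∈ s, f i) := by
  simpa [Real.sqrt_mul (Nat.cast_nonneg _)] using
    Real.sum_sqrt_mul_sqrt_le s (f := fun _ => 1) (fun _ => zero_le_one) hf

theorem pigeonhole_sqrt_count_sum_general
    (X : Type*) [Fintype X] [DecidableEq X] (m : ℕ) (hm : Fintype.card X = m)
    (K : ℕ) (z : ℕ → X) :
    ∑ k ∈ Finset.range K,
        1 / Real.sqrt (max (((Finset.range k).filter fun j => z j = z k).card : ℝ) 1) ≤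
      (m : ℝ) + 2 * Real.sqrt ((m : ℝ) * K) := by
  set visits : X → ℕ := fun x => #{k ∈ range K | z k = x}
  have total_visits : ∑ x, (visits x : ℝ) = K := by
    exact_mod_cast (card_eq_sum_card_fiberwise fun k _ => mem_univ (z k)).symm.trans
      (card_range K)
  rw [sum_range_comp_card_earlier_eq z K fun i => 1 / √(max (i : ℝ) 1)]
  calc ∑ x, ∑ i ∈ range (visits x), 1 / √(max (i : ℝ) 1)
      ≤ ∑ x, (1 + 2 * √(visits x)) :=
        sum_le_sum fun x _ => sum_range_one_div_sqrt_max_one_le _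
    _ = m + 2 * ∑ x, √(visits x) := by
        rw [sum_add_distrib, ← mul_sum, sum_const, card_univ, hm, nsmul_one]
    _ ≤ m + 2 * √(m * K) := by
        gcongr
        simpa [hm, total_visits] using
          sum_sqrt_le_sqrt_card_mul_sum univ fun x => Nat.cast_nonneg (α := ℝ) (visits x)

/-- Pigeonhole bound: for a sequence `z_1, …, z_K` in a finite set of size `m`, letting
`N_k` be the number of earlier occurrences of `z_k`, one has
`∑_{k=1}^K 1 / √(max N_k 1) ≤ m + 2 √(m K)`. -/
theorem pigeonhole_sqrt_count_sum
    (X : Type*) [Fintype X] [DecidableEq X] (m : ℕ) (hm : Fintype.card X = m)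
    (K : ℕ) (hK : 1 ≤ K) (z : ℕ → X) :
    ∑ k ∈ Finset.range K,
        1 / Real.sqrt (max (((Finset.range k).filter fun j => z j = z k).card : ℝ) 1) ≤
      (m : ℝ) + 2 * Real.sqrt ((m : ℝ) * K) :=
  pigeonhole_sqrt_count_sum_general X m hm K z
end
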